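/- arXiv:1705.10502 — 4 statements merged into one kernel-verified Lean document; each statement's English description precedes it below -/
import Mathlib

section
/- Let C(U), C(X), C(Z) be pretriangulated categories related by gluing and equipped with weight structures compatible with the gluing. Let α ≤ 0 and β ≥ 1 be integers, let M_U ∈ C(U)_{w=0} be such that i^* j_* M_U is without weights α, α+1, …, β, and let M ∈ C(X)_{w=0,i^*w≤−1,i^!w≥1} satisfy j^* M ≅ M_U. Then: (a) in the distinguished triangle (i_* i^* M)[−1] → j_! M_U → M → i_* i^* M obtained from the localization triangle, one has (i_* i^* M)[−1] ∈ C(X)_{w≤α−2}, so this triangle is a weight filtration of j_! M_U avoiding weights α−1, α, …, −1; (b) in the distinguished triangle M → j_* M_U → (i_* i^! M)[1] → M[1], one has (i_* i^! M)[1] ∈ C(X)_{w≥β+1}, so this triangle is a weight filtration of j_* M_U avoiding weights 1, 2, …, β. Consequently, for any weight-exact exact functor a : C(X) → D to a pretriangulated category with weight structure, a(j_! M_U) is without weights α−1, …, −1 and a(j_* M_U) is without weights 1, …, β. (Theorem 2G (a), (b), abstract form.) -/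
set_option linter.unusedVariables false

open CategoryTheory Limits Pretriangulated

universe w₁ w₂ w₃ w₄ v₁ v₂ v₃ v₄ u₁ u₂ u₃ u₄

/-- A weight structure on a pretriangulated category `C`: a pair of classes of objects
`(C_{w≤0}, C_{w≥0})`, each containing the zero objects and closed under isomorphisms and
retracts (direct summands), such that `C_{w≤0}[-1] ⊆ C_{w≤0}`, `C_{w≥0}[1] ⊆ C_{w≥0}`,
`Hom(A, B[1]) = 0` for `A ∈ C_{w≤0}`, `B ∈ C_{w≥0}`, and every object admits a weight
filtration. -/
structure WeightStructure (C : Type*) [Category C] [HasZeroObject C] [Preadditive C]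
    [HasShift C ℤ] [∀ n : ℤ, (shiftFunctor C n).Additive] [Pretriangulated C] where
  le : C → Prop
  ge : C → Prop
  le_zero : ∀ X : C, IsZero X → le X
  ge_zero : ∀ X : C, IsZero X → ge X
  le_iso : ∀ {X Y : C}, (X ≅ Y) → le X → le Y
  ge_iso : ∀ {X Y : C}, (X ≅ Y) → ge X → ge Y
  le_retract : ∀ {X Y : C} (s : X ⟶ Y) (r : Y ⟶ X), s ≫ r = 𝟙 X → le Y → le X
  ge_retract : ∀ {X Y : C} (s : X ⟶ Y) (r : Y ⟶ X), s ≫ r = 𝟙 X → ge Y → ge X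
  le_shift : ∀ X : C, le X → le (X⟦(-1 : ℤ)⟧)
  ge_shift : ∀ X : C, ge X → ge (X⟦(1 : ℤ)⟧)
  orth : ∀ {A B : C} (f : A ⟶ B⟦(1 : ℤ)⟧), le A → ge B → f = 0
  exists_weight_filtration : ∀ M : C, ∃ (A B : C) (f : A ⟶ M) (g : M ⟶ B)
    (h : B ⟶ A⟦(1 : ℤ)⟧), (Triangle.mk f g h ∈ distTriang C) ∧ le A ∧ ge (B⟦(-1 : ℤ)⟧)

namespace WeightStructure

variable {C : Type*} [Category C] [HasZeroObject C] [Preadditive C]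
    [HasShift C ℤ] [∀ n : ℤ, (shiftFunctor C n).Additive] [Pretriangulated C]

/-- `X ∈ C_{w ≤ n}`, i.e. `X[-n] ∈ C_{w ≤ 0}`. -/
def leW (w : WeightStructure C) (n : ℤ) (X : C) : Prop := w.le (X⟦(-n : ℤ)⟧)

/-- `X ∈ C_{w ≥ n}`, i.e. `X[-n] ∈ C_{w ≥ 0}`. -/
def geW (w : WeightStructure C) (n : ℤ) (X : C) : Prop := w.ge (X⟦(-n : ℤ)⟧)

/-- The heart `C_{w = 0}`. -/
def heart (w : WeightStructure C) (X : C) : Prop := w.le X ∧ w.ge X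

/-- `M` is without weights `m, …, n`: there is a distinguished triangle
`M_{≤ m-1} → M → M_{≥ n+1} → M_{≤ m-1}[1]` with `M_{≤ m-1} ∈ C_{w ≤ m-1}` and
`M_{≥ n+1} ∈ C_{w ≥ n+1}` (a weight filtration avoiding weights `m, …, n`). -/
def WithoutWeights (w : WeightStructure C) (m n : ℤ) (M : C) : Prop :=
  ∃ (A B : C) (f : A ⟶ M) (g : M ⟶ B) (h : B ⟶ A⟦(1 : ℤ)⟧),
    (Triangle.mk f g h ∈ distTriang C) ∧ w.leW (m - 1) A ∧ w.geW (n + 1) B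

end WeightStructure

/-- A weight-exact (exact) functor between pretriangulated categories equipped with
weight structures: `F(C_{w≤0}) ⊆ D_{w≤0}` and `F(C_{w≥0}) ⊆ D_{w≥0}`. -/
def WeightExact {C : Type*} [Category C] [HasZeroObject C] [Preadditive C]
    [HasShift C ℤ] [∀ n : ℤ, (shiftFunctor C n).Additive] [Pretriangulated C]
    {D : Type*} [Category D] [HasZeroObject D] [Preadditive D]
    [HasShift D ℤ] [∀ n : ℤ, (shiftFunctor D n).Additive] [Pretriangulated D]
    (wC : WeightStructure C) (wD : WeightStructure D) (F : C ⥤ D) : Prop :=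
  (∀ X : C, wC.le X → wD.le (F.obj X)) ∧ (∀ X : C, wC.ge X → wD.ge (F.obj X))

variable {CU : Type*} [Category CU] [HasZeroObject CU] [Preadditive CU]
  [HasShift CU ℤ] [∀ n : ℤ, (shiftFunctor CU n).Additive] [Pretriangulated CU]
variable {CX : Type*} [Category CX] [HasZeroObject CX] [Preadditive CX]
  [HasShift CX ℤ] [∀ n : ℤ, (shiftFunctor CX n).Additive] [Pretriangulated CX]
variable {CZ : Type*} [Category CZ] [HasZeroObject CZ] [Preadditive CZ]
  [HasShift CZ ℤ] [∀ n : ℤ, (shiftFunctor CZ n).Additive] [Pretriangulated CZ]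

/- The six gluing functors: `jl = j_!`, `js = j^*`, `jr = j_*`,
   `il = i^*`, `im = i_*`, `ir = i^!`; all of them are exact. -/
variable (jl : CU ⥤ CX) (js : CX ⥤ CU) (jr : CU ⥤ CX)
  (il : CX ⥤ CZ) (im : CZ ⥤ CX) (ir : CX ⥤ CZ)
  [jl.CommShift ℤ] [jl.IsTriangulated] [js.CommShift ℤ] [js.IsTriangulated]
  [jr.CommShift ℤ] [jr.IsTriangulated] [il.CommShift ℤ] [il.IsTriangulated]
  [im.CommShift ℤ] [im.IsTriangulated] [ir.CommShift ℤ] [ir.IsTriangulated]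
  [im.Full] [im.Faithful]
variable (adj₁ : jl ⊣ js) (adj₂ : js ⊣ jr) (adj₃ : il ⊣ im) (adj₄ : im ⊣ ir)

/-- The axioms of a gluing ("recollement") situation relating `C(U)`, `C(X)` and `C(Z)`:
`j^* ∘ i_* = 0`, the unit `id → j^* j_!` and the counit `j^* j_* → id` are isomorphisms,
and the two localization triangles `j_! j^* M → M → i_* i^* M → (j_! j^* M)[1]` and
`i_* i^! M → M → j_* j^* M → (i_* i^! M)[1]` are distinguished.
(Full faithfulness of `i_*` is part of the ambient variable context.) -/
structure IsGluing : Prop where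
  js_im_zero : ∀ Z : CZ, IsZero (js.obj (im.obj Z))
  unit_iso : IsIso adj₁.unit
  counit_iso : IsIso adj₂.counit
  tri₁ : ∀ M : CX, ∃ δ : im.obj (il.obj M) ⟶ (jl.obj (js.obj M))⟦(1 : ℤ)⟧,
    Triangle.mk (adj₁.counit.app M) (adj₃.unit.app M) δ ∈ distTriang CX
  tri₂ : ∀ M : CX, ∃ δ : jr.obj (js.obj M) ⟶ (im.obj (ir.obj M))⟦(1 : ℤ)⟧,
    Triangle.mk (adj₄.counit.app M) (adj₂.unit.app M) δ ∈ distTriang CX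

variable (wU : WeightStructure CU) (wX : WeightStructure CX) (wZ : WeightStructure CZ)

/-- Compatibility of the weight structures on `C(U)`, `C(X)`, `C(Z)` with the gluing:
the left adjoints `j_!`, `j^*`, `i^*`, `i_*` respect `(w ≤ 0)`, and the right adjoints
`j^*`, `j_*`, `i_*`, `i^!` respect `(w ≥ 0)`. -/
structure GluedWeights : Prop where
  jl_le : ∀ X : CU, wU.le X → wX.le (jl.obj X)
  js_le : ∀ X : CX, wX.le X → wU.le (js.obj X)
  js_ge : ∀ X : CX, wX.ge X → wU.ge (js.obj X)
  il_le : ∀ X : CX, wX.le X → wZ.le (il.obj X)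
  im_le : ∀ X : CZ, wZ.le X → wX.le (im.obj X)
  im_ge : ∀ X : CZ, wZ.ge X → wX.ge (im.obj X)
  jr_ge : ∀ X : CU, wU.ge X → wX.ge (jr.obj X)
  ir_ge : ∀ X : CX, wX.ge X → wZ.ge (ir.obj X)

/-! Applying `i^*` to the localization triangle `i_* i^! M → M → j_* j^* M` gives a
distinguished triangle `i^! M → i^* M → i^* j_* M_U → (i^! M)[1]` in `C(Z)`. Comparing it with a
weight filtration `A → i^* j_* M_U → B` avoiding the weights `α, …, β`, orthogonality makes
`i^* M` a retract of `A` and `(i^! M)[1]` a retract of `B`, so `i^* M ∈ C(Z)_{w ≤ α-1}` and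
`(i^! M)[1] ∈ C(Z)_{w ≥ β+1}`. The rotated localization triangles of `M` are then weight
filtrations of `j_! M_U` and `j_* M_U` with the required gaps, and weight-exact triangulated
functors carry weight filtrations to weight filtrations. -/

namespace CategoryTheory.Pretriangulated

variable {C : Type*} [Category C] [HasZeroObject C] [Preadditive C]
  [HasShift C ℤ] [∀ n : ℤ, (shiftFunctor C n).Additive] [Pretriangulated C]

lemma exists_distTriang_of_iso {T : Triangle C} (hT : T ∈ distTriang C) {X₁ X₂ X₃ : C}
    (e₁ : T.obj₁ ≅ X₁) (e₂ : T.obj₂ ≅ X₂) (e₃ : T.obj₃ ≅ X₃) :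
    ∃ (f : X₁ ⟶ X₂) (g : X₂ ⟶ X₃) (h : X₃ ⟶ X₁⟦(1 : ℤ)⟧), Triangle.mk f g h ∈ distTriang C :=
  ⟨_, _, _, isomorphic_distinguished T hT _
    (Triangle.isoMk (Triangle.mk (e₁.inv ≫ T.mor₁ ≫ e₂.hom) (e₂.inv ≫ T.mor₂ ≫ e₃.hom)
      (e₃.inv ≫ T.mor₃ ≫ e₁.hom⟦(1 : ℤ)⟧')) T e₁.symm e₂.symm e₃.symm
      (by simp [Triangle.mk]) (by simp [Triangle.mk]) (by simp [Triangle.mk]))⟩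

variable {K L N A B : C} {f : K ⟶ L} {g : L ⟶ N} {h : N ⟶ K⟦(1 : ℤ)⟧}
  {a : A ⟶ N} {b : N ⟶ B} {c : B ⟶ A⟦(1 : ℤ)⟧}

lemma nonempty_retract_obj₂_obj₁_of_distTriang (hT : Triangle.mk f g h ∈ distTriang C)
    (hT' : Triangle.mk a b c ∈ distTriang C) (hLB : ∀ u : L ⟶ B, u = 0)
    (hAK : ∀ u : A ⟶ K⟦(1 : ℤ)⟧, u = 0) (hLK : ∀ u : L ⟶ K, u = 0) :
    Nonempty (Retract L A) := by
  obtain ⟨i, hi⟩ : ∃ i : L ⟶ A, g = i ≫ a := Triangle.coyoneda_exact₂ _ hT' g (hLB _)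
  obtain ⟨r, hr⟩ : ∃ r : A ⟶ L, a = r ≫ g := Triangle.coyoneda_exact₃ _ hT a (hAK _)
  obtain ⟨u, hu⟩ : ∃ u : L ⟶ K, 𝟙 L - i ≫ r = u ≫ f :=
    Triangle.coyoneda_exact₂ _ hT (𝟙 L - i ≫ r) (by
      change (𝟙 L - i ≫ r) ≫ g = 0
      rw [Preadditive.sub_comp, Category.id_comp, Category.assoc, ← hr, ← hi, sub_self])
  rw [hLK u, zero_comp, sub_eq_zero] at hu
  exact ⟨⟨i, r, hu.symm⟩⟩

lemma nonempty_retract_shift_obj₁_obj₃_of_distTriang (hT : Triangle.mk f g h ∈ distTriang C)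
    (hT' : Triangle.mk a b c ∈ distTriang C) (hLB : ∀ u : L ⟶ B, u = 0)
    (hAK : ∀ u : A ⟶ K⟦(1 : ℤ)⟧, u = 0) (hLK : ∀ u : L⟦(1 : ℤ)⟧ ⟶ K⟦(1 : ℤ)⟧, u = 0) :
    Nonempty (Retract (K⟦(1 : ℤ)⟧) B) := by
  obtain ⟨i, hi⟩ : ∃ i : K⟦(1 : ℤ)⟧ ⟶ B, b = h ≫ i := Triangle.yoneda_exact₃ _ hT b (hLB _)
  obtain ⟨r, hr⟩ : ∃ r : B ⟶ K⟦(1 : ℤ)⟧, h = b ≫ r := Triangle.yoneda_exact₂ _ hT' h (hAK _)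
  obtain ⟨u, hu⟩ := Triangle.yoneda_exact₃ _ (rot_of_distTriang _ hT) (𝟙 (K⟦(1 : ℤ)⟧) - i ≫ r)
    (by
      change h ≫ (𝟙 _ - i ≫ r) = 0
      rw [Preadditive.comp_sub, Category.comp_id, ← Category.assoc, ← hi, ← hr, sub_self])
  obtain rfl : u = 0 := hLK u
  rw [comp_zero] at hu
  exact ⟨⟨i, r, (sub_eq_zero.mp hu).symm⟩⟩

end CategoryTheory.Pretriangulated

namespace WeightStructure

variable {C : Type*} [Category C] [HasZeroObject C] [Preadditive C]
  [HasShift C ℤ] [∀ n : ℤ, (shiftFunctor C n).Additive] [Pretriangulated C]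
  (w : WeightStructure C)

lemma geW_of_iso {X Y : C} {n : ℤ} (e : X ≅ Y) (hX : w.geW n X) : w.geW n Y :=
  w.ge_iso ((shiftFunctor C (-n)).mapIso e) hX

lemma leW_of_retract {X Y : C} {n : ℤ} (e : Retract X Y) (hY : w.leW n Y) : w.leW n X :=
  w.le_retract _ _ (e.map (shiftFunctor C (-n))).retract hY

lemma geW_of_retract {X Y : C} {n : ℤ} (e : Retract X Y) (hY : w.geW n Y) : w.geW n X :=
  w.ge_retract _ _ (e.map (shiftFunctor C (-n))).retract hY

lemma leW_shift {X : C} {n m : ℤ} (k : ℤ) (h : n + k = m) (hX : w.leW n X) :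
    w.leW m (X⟦k⟧) :=
  w.le_iso ((shiftFunctorAdd' C k (-m) (-n) (by omega)).app X) hX

lemma geW_shift {X : C} {n m : ℤ} (k : ℤ) (h : n + k = m) (hX : w.geW n X) :
    w.geW m (X⟦k⟧) :=
  w.ge_iso ((shiftFunctorAdd' C k (-m) (-n) (by omega)).app X) hX

lemma leW_mono {X : C} {n m : ℤ} (h : n ≤ m) (hX : w.leW n X) : w.leW m X := by
  induction m, h using Int.leInduction with
  | base => exact hX
  | succ k _ ih =>
    exact w.le_iso ((shiftFunctorAdd' C (-k) (-1) (-(k + 1)) (by ring)).app X).symm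
      (w.le_shift _ ih)

lemma geW_anti {X : C} {n m : ℤ} (h : n ≤ m) (hX : w.geW m X) : w.geW n X := by
  induction m, h using Int.leInduction with
  | base => exact hX
  | succ k _ ih =>
    exact ih (w.ge_iso ((shiftFunctorAdd' C (-(k + 1)) 1 (-k) (by ring)).app X).symm
      (w.ge_shift _ hX))

lemma leW_zero_of_le {X : C} (hX : w.le X) : w.leW 0 X :=
  w.le_iso ((shiftFunctorZero' C (-0 : ℤ) neg_zero).app X).symm hX

lemma geW_zero_of_ge {X : C} (hX : w.ge X) : w.geW 0 X :=
  w.ge_iso ((shiftFunctorZero' C (-0 : ℤ) neg_zero).app X).symm hX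

lemma hom_eq_zero_of_leW_of_geW {X Y : C} {n m : ℤ} (hX : w.leW n X) (hY : w.geW m Y)
    (h : n < m) (f : X ⟶ Y) : f = 0 := by
  let e := (shiftFunctorAdd' C (-(n + 1)) 1 (-n) (by ring)).app Y
  have hf := w.orth ((shiftFunctor C (-n)).map f ≫ e.hom) hX (w.geW_anti (by omega) hY)
  apply (shiftFunctor C (-n)).map_injective
  rw [Functor.map_zero, ← cancel_mono e.hom, hf, zero_comp]

section Functor

variable {D : Type*} [Category D] [HasZeroObject D] [Preadditive D]
  [HasShift D ℤ] [∀ n : ℤ, (shiftFunctor D n).Additive] [Pretriangulated D]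
  {w} {w' : WeightStructure D} (F : C ⥤ D) [F.CommShift ℤ]

lemma leW_map (hF : ∀ X, w.le X → w'.le (F.obj X)) {X : C} {n : ℤ} (hX : w.leW n X) :
    w'.leW n (F.obj X) :=
  w'.le_iso ((F.commShiftIso (-n)).app X) (hF _ hX)

lemma geW_map (hF : ∀ X, w.ge X → w'.ge (F.obj X)) {X : C} {n : ℤ} (hX : w.geW n X) :
    w'.geW n (F.obj X) :=
  w'.ge_iso ((F.commShiftIso (-n)).app X) (hF _ hX)

variable {F} [F.IsTriangulated]

lemma WithoutWeights.map {M : C} {m n : ℤ} (hM : w.WithoutWeights m n M)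
    (hF : WeightExact w w' F) : w'.WithoutWeights m n (F.obj M) := by
  obtain ⟨A, B, f, g, h, hT, hA, hB⟩ := hM
  exact ⟨_, _, _, _, _, F.map_distinguished _ hT, leW_map F hF.1 hA, geW_map F hF.2 hB⟩

end Functor

lemma withoutWeights_of_distTriang {A M B : C} {f : A ⟶ M} {g : M ⟶ B}
    {h : B ⟶ A⟦(1 : ℤ)⟧} (hT : Triangle.mk f g h ∈ distTriang C) {k l m n : ℤ}
    (hA : w.leW k A) (hB : w.geW l B) (hk : k < m) (hl : n < l) : w.WithoutWeights m n M :=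
  ⟨A, B, f, g, h, hT, w.leW_mono (by omega) hA, w.geW_anti (by omega) hB⟩

lemma leW_and_geW_of_distTriang {K L N : C} {f : K ⟶ L} {g : L ⟶ N} {h : N ⟶ K⟦(1 : ℤ)⟧}
    (hT : Triangle.mk f g h ∈ distTriang C) {α β : ℤ} (hN : w.WithoutWeights α β N)
    (hK : w.geW 1 K) (hL : w.leW (-1) L) (hα : α ≤ 2) (hβ : -1 ≤ β) :
    w.leW (α - 1) L ∧ w.geW (β + 1) (K⟦(1 : ℤ)⟧) := by
  obtain ⟨A, B, a, b, c, hT', hA, hB⟩ := hN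
  have hK₁ : w.geW 2 (K⟦(1 : ℤ)⟧) := w.geW_shift 1 (by norm_num) hK
  have hLB := w.hom_eq_zero_of_leW_of_geW hL hB (by omega)
  have hAK := w.hom_eq_zero_of_leW_of_geW hA hK₁ (by omega)
  obtain ⟨eL⟩ := nonempty_retract_obj₂_obj₁_of_distTriang hT hT' hLB hAK
    (w.hom_eq_zero_of_leW_of_geW hL hK (by omega))
  obtain ⟨eK⟩ := nonempty_retract_shift_obj₁_obj₃_of_distTriang hT hT' hLB hAK
    (w.hom_eq_zero_of_leW_of_geW (w.leW_shift (m := 0) 1 (by norm_num) hL) hK₁ (by omega))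
  exact ⟨w.leW_of_retract eL hA, w.geW_of_retract eK hB⟩

end WeightStructure

/-- **Theorem 2G (a), (b), abstract form.** Let `M_U ∈ C(U)_{w=0}` with `i^* j_* M_U`
without weights `α, …, β` (`α ≤ 0 ≤ 1 ≤ β`), and let `M = j_{!*} M_U`, i.e.
`M ∈ C(X)_{w=0, i^*w ≤ -1, i^!w ≥ 1}` with `j^* M ≅ M_U`. Then
`(i_* i^* M)[-1] ∈ C(X)_{w ≤ α-2}` and there is a distinguished triangle
`(i_* i^* M)[-1] → j_! M_U → M → i_* i^* M`, a weight filtration of `j_! M_U` avoiding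
weights `α-1, …, -1`; dually `(i_* i^! M)[1] ∈ C(X)_{w ≥ β+1}` and there is a
distinguished triangle `M → j_* M_U → (i_* i^! M)[1] → M[1]`, a weight filtration of
`j_* M_U` avoiding weights `1, …, β`. Consequently, for any weight-exact exact functor
`a : C(X) → D`, `a(j_! M_U)` is without weights `α-1, …, -1` and `a(j_* M_U)` is without
weights `1, …, β`. -/
theorem weight_filtrations_of_jl_and_jr
    (hglue : IsGluing jl js jr il im ir adj₁ adj₂ adj₃ adj₄)
    (hw : GluedWeights jl js jr il im ir wU wX wZ)
    {D : Type*} [Category D] [HasZeroObject D] [Preadditive D]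
    [HasShift D ℤ] [∀ n : ℤ, (shiftFunctor D n).Additive] [Pretriangulated D]
    (wD : WeightStructure D)
    (a : CX ⥤ D) [a.CommShift ℤ] [a.IsTriangulated] (ha : WeightExact wX wD a)
    (α β : ℤ) (hα : α ≤ 0) (hβ : 1 ≤ β)
    (MU : CU) (hMU : wU.heart MU)
    (hav : wZ.WithoutWeights α β (il.obj (jr.obj MU)))
    (M : CX) (hM : wX.heart M ∧ wZ.leW (-1) (il.obj M) ∧ wZ.geW 1 (ir.obj M))
    (hiso : Nonempty (js.obj M ≅ MU)) :
    (wX.leW (α - 2) ((im.obj (il.obj M))⟦(-1 : ℤ)⟧) ∧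
      ∃ (d : (im.obj (il.obj M))⟦(-1 : ℤ)⟧ ⟶ jl.obj MU) (f : jl.obj MU ⟶ M)
        (g : M ⟶ ((im.obj (il.obj M))⟦(-1 : ℤ)⟧)⟦(1 : ℤ)⟧),
        Triangle.mk d f g ∈ distTriang CX) ∧
    (wX.geW (β + 1) ((im.obj (ir.obj M))⟦(1 : ℤ)⟧) ∧
      ∃ (f : M ⟶ jr.obj MU) (g : jr.obj MU ⟶ (im.obj (ir.obj M))⟦(1 : ℤ)⟧)
        (h : (im.obj (ir.obj M))⟦(1 : ℤ)⟧ ⟶ M⟦(1 : ℤ)⟧),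
        Triangle.mk f g h ∈ distTriang CX) ∧
    wX.WithoutWeights (α - 1) (-1) (jl.obj MU) ∧
    wX.WithoutWeights 1 β (jr.obj MU) ∧
    wD.WithoutWeights (α - 1) (-1) (a.obj (jl.obj MU)) ∧
    wD.WithoutWeights 1 β (a.obj (jr.obj MU)) := by
  obtain ⟨⟨hMle, hMge⟩, hil, hir⟩ := hM
  obtain ⟨e⟩ := hiso
  obtain ⟨δ₁, hT₁⟩ := hglue.tri₁ M
  obtain ⟨δ₂, hT₂⟩ := hglue.tri₂ M
  -- the counit of `i^* ⊣ i_*` is invertible because `i_*` is fully faithful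
  have eZ : il.obj (im.obj (ir.obj M)) ≅ ir.obj M := asIso (adj₃.counit.app (ir.obj M))
  obtain ⟨_, _, _, hTZ⟩ := exists_distTriang_of_iso (il.map_distinguished _ hT₂) eZ
    (Iso.refl (il.obj M)) (il.mapIso (jr.mapIso e))
  obtain ⟨hilα, hirβ⟩ := wZ.leW_and_geW_of_distTriang hTZ hav hir hil (by omega) (by omega)
  have hleft : wX.leW (α - 2) ((im.obj (il.obj M))⟦(-1 : ℤ)⟧) :=
    wX.leW_shift (-1) (by ring) (WeightStructure.leW_map im hw.im_le hilα)
  have hright : wX.geW (β + 1) ((im.obj (ir.obj M))⟦(1 : ℤ)⟧) :=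
    wX.geW_of_iso ((im.commShiftIso (1 : ℤ)).app _) (WeightStructure.geW_map im hw.im_ge hirβ)
  obtain ⟨d, f, g, hTl⟩ := exists_distTriang_of_iso (inv_rot_of_distTriang _ hT₁)
    (Iso.refl _) (jl.mapIso e) (Iso.refl _)
  obtain ⟨f', g', h', hTr⟩ := exists_distTriang_of_iso (rot_of_distTriang _ hT₂)
    (Iso.refl _) (jr.mapIso e) (Iso.refl _)
  have hjl : wX.WithoutWeights (α - 1) (-1) (jl.obj MU) :=
    wX.withoutWeights_of_distTriang hTl hleft (wX.geW_zero_of_ge hMge) (by omega) (by omega)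
  have hjr : wX.WithoutWeights 1 β (jr.obj MU) :=
    wX.withoutWeights_of_distTriang hTr (wX.leW_zero_of_le hMle) hright (by omega) (by omega)
  exact ⟨⟨hleft, d, f, g, hTl⟩, ⟨hright, f', g', h', hTr⟩, hjl, hjr, hjl.map ha, hjr.map ha⟩
end

section
/- Let C be a pretriangulated category with weight structure, let A ∈ C_{w≤0}, B ∈ C_{w≥0}, and u : A → B a morphism, and suppose there is a distinguished triangle A → B → E → A[1], with first map u, in which E is without weights 0 and 1. Then A is without weight −1, B is without weight 1, the induced morphism Gr_0(u) : Gr_0 A → Gr_0 B is an isomorphism, and for any factorization A → M → B of u with M ∈ C_{w=0}, the object Gr_0 A is canonically identified with a direct factor of M admitting a canonical complement (i.e. M decomposes as Gr_0 A ⊕ M′, compatibly with the factorization). (Theorem 2I, abstract form; cf. [W4, Cor. 2.5].) -/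
set_option linter.unusedVariables false

open CategoryTheory Limits Pretriangulated

universe w₁ w₂ w₃ w₄ v₁ v₂ v₃ v₄ u₁ u₂ u₃ u₄

/-!
Choose a weight filtration `E' → E → E''` of `E` with `E' ∈ C_{w≤-1}` and `E'' ∈ C_{w≥2}`.
With the octahedral axiom, one object `N` would sit in triangles `E'[-1] → A → N` and
`N → B → E''`, so `N = Gr₀ A = Gr₀ B`. A pretriangulated category only gives the two halves
separately: a cone `N` of `E'[-1] → E[-1] → A` and a fibre `F` of `B → E → E''`. What survives
of the octahedron is enough to compare them. For composable `f, g` with cones `C_f, C_g, C_{fg}`,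
TR3 gives maps `C_f → C_{fg} → C_g`; objects left (right) orthogonal to `C_f` and `C_g` are
orthogonal to `C_{fg}`, maps out of `C_f` extend to `C_{fg}` once `Hom(C_g[-1], -)` vanishes,
and maps into `C_g` lift to `C_{fg}` once `Hom(-, C_f[1])` vanishes. Hence `N, F` lie in the
heart, maps from `C_{w≤0}` to `B` lift to `N` and maps from `A` to `C_{w≥0}` extend to `F`,
which makes the canonical map `N → F` split mono and split epi. Truncations avoiding a weight
are unique up to unique isomorphism, and a factorisation `A → M → B` through the heart induces
`Gr₀ A → M → Gr₀ B` composing to the isomorphism.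
-/

namespace CategoryTheory.Pretriangulated

variable {C : Type*} [Category C] [HasZeroObject C] [Preadditive C]
    [HasShift C ℤ] [∀ n : ℤ, (shiftFunctor C n).Additive] [Pretriangulated C]
    {X Y W Cf Cg Ch Z : C} {f : X ⟶ Y} {g : Y ⟶ W} {pf : Y ⟶ Cf} {df : Cf ⟶ X⟦(1 : ℤ)⟧}
    {pg : W ⟶ Cg} {dg : Cg ⟶ Y⟦(1 : ℤ)⟧} {ph : W ⟶ Ch} {dh : Ch ⟶ X⟦(1 : ℤ)⟧}

lemma yoneda_exact_shift_of_distTriang (hf : Triangle.mk f pf df ∈ distTriang C)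
    (x : X⟦(1 : ℤ)⟧ ⟶ Z) (hx : df ≫ x = 0) : ∃ y : Y⟦(1 : ℤ)⟧ ⟶ Z, x = f⟦(1 : ℤ)⟧' ≫ y := by
  have hrot : Triangle.mk pf df (-(f⟦(1 : ℤ)⟧')) ∈ distTriang C := rot_of_distTriang _ hf
  -- Naming the negated map lets the factorisation below be typed over `Y⟦1⟧` itself rather
  -- than over a projection of the rotated triangle.
  generalize hnf : -(f⟦(1 : ℤ)⟧') = nf at hrot
  obtain ⟨y, hy⟩ : ∃ y : Y⟦(1 : ℤ)⟧ ⟶ Z, x = nf ≫ y := Triangle.yoneda_exact₃ _ hrot x hx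
  exact ⟨-y, by rw [hy, ← hnf, Preadditive.neg_comp, Preadditive.comp_neg]⟩

lemma coyoneda_exact_shift_of_distTriang (hf : Triangle.mk f pf df ∈ distTriang C)
    (x : Z ⟶ Y⟦(1 : ℤ)⟧) (hx : x ≫ pf⟦(1 : ℤ)⟧' = 0) :
    ∃ y : Z ⟶ X⟦(1 : ℤ)⟧, x = y ≫ f⟦(1 : ℤ)⟧' := by
  have hrot : Triangle.mk df (-(f⟦(1 : ℤ)⟧')) (-(pf⟦(1 : ℤ)⟧')) ∈ distTriang C :=
    rot_of_distTriang _ (rot_of_distTriang _ hf)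
  generalize hnf : -(f⟦(1 : ℤ)⟧') = nf at hrot
  generalize hnpf : -(pf⟦(1 : ℤ)⟧') = npf at hrot
  obtain ⟨y, hy⟩ : ∃ y : Z ⟶ X⟦(1 : ℤ)⟧, x = y ≫ nf :=
    Triangle.coyoneda_exact₃ _ hrot x (by
      change x ≫ npf = 0
      rw [← hnpf, Preadditive.comp_neg, hx, neg_zero])
  exact ⟨-y, by rw [hy, ← hnf, Preadditive.neg_comp, Preadditive.comp_neg]⟩

lemma exists_cone_map_to_cone_comp (hf : Triangle.mk f pf df ∈ distTriang C)
    (hh : Triangle.mk (f ≫ g) ph dh ∈ distTriang C) :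
    ∃ c : Cf ⟶ Ch, pf ≫ c = g ≫ ph ∧ c ≫ dh = df := by
  obtain ⟨c, hc₁, hc₂⟩ : ∃ c : Cf ⟶ Ch, pf ≫ c = g ≫ ph ∧ df ≫ (𝟙 X)⟦(1 : ℤ)⟧' = c ≫ dh :=
    complete_distinguished_triangle_morphism _ _ hf hh (𝟙 X) g (Category.id_comp _).symm
  rw [CategoryTheory.Functor.map_id, Category.comp_id] at hc₂
  exact ⟨c, hc₁, hc₂.symm⟩

lemma exists_cone_comp_map_to_cone (hg : Triangle.mk g pg dg ∈ distTriang C)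
    (hh : Triangle.mk (f ≫ g) ph dh ∈ distTriang C) :
    ∃ c' : Ch ⟶ Cg, ph ≫ c' = pg ∧ dh ≫ f⟦(1 : ℤ)⟧' = c' ≫ dg := by
  obtain ⟨c', hc'₁, hc'₂⟩ : ∃ c' : Ch ⟶ Cg, ph ≫ c' = 𝟙 W ≫ pg ∧ dh ≫ f⟦(1 : ℤ)⟧' = c' ≫ dg :=
    complete_distinguished_triangle_morphism _ _ hh hg f (𝟙 W) (Category.comp_id _)
  rw [Category.id_comp] at hc'₁
  exact ⟨c', hc'₁, hc'₂⟩

lemma hom_to_cone_comp_eq_zero (hf : Triangle.mk f pf df ∈ distTriang C)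
    (hg : Triangle.mk g pg dg ∈ distTriang C) (hh : Triangle.mk (f ≫ g) ph dh ∈ distTriang C)
    (hZf : ∀ φ : Z ⟶ Cf, φ = 0) (hZg : ∀ φ : Z ⟶ Cg, φ = 0) (φ : Z ⟶ Ch) : φ = 0 := by
  obtain ⟨c, hc, -⟩ := exists_cone_map_to_cone_comp hf hh
  obtain ⟨c', hc'₁, hc'₂⟩ := exists_cone_comp_map_to_cone hg hh
  obtain ⟨v, hv⟩ : ∃ v : Z ⟶ Cf, φ ≫ dh = v ≫ df :=
    Triangle.coyoneda_exact₁ _ hf (φ ≫ dh) (by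
      change (φ ≫ dh) ≫ f⟦(1 : ℤ)⟧' = 0
      rw [Category.assoc, hc'₂, ← Category.assoc, hZg (φ ≫ c'), zero_comp])
  obtain ⟨x, hx⟩ : ∃ x : Z ⟶ W, φ = x ≫ ph :=
    Triangle.coyoneda_exact₃ _ hh φ (by
      change φ ≫ dh = 0
      rw [hv, hZf v, zero_comp])
  obtain ⟨y, hy⟩ : ∃ y : Z ⟶ Y, x = y ≫ g :=
    Triangle.coyoneda_exact₂ _ hg x (by
      change x ≫ pg = 0
      rw [← hc'₁, ← Category.assoc, ← hx]
      exact hZg _)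
  rw [hx, hy, Category.assoc, ← hc, ← Category.assoc, hZf (y ≫ pf), zero_comp]

lemma hom_from_cone_comp_eq_zero (hf : Triangle.mk f pf df ∈ distTriang C)
    (hg : Triangle.mk g pg dg ∈ distTriang C) (hh : Triangle.mk (f ≫ g) ph dh ∈ distTriang C)
    (hfZ : ∀ φ : Cf ⟶ Z, φ = 0) (hgZ : ∀ φ : Cg ⟶ Z, φ = 0) (φ : Ch ⟶ Z) : φ = 0 := by
  obtain ⟨c, hc₁, hc₂⟩ := exists_cone_map_to_cone_comp hf hh
  obtain ⟨c', -, hc'⟩ := exists_cone_comp_map_to_cone hg hh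
  obtain ⟨y, hy⟩ : ∃ y : Cg ⟶ Z, ph ≫ φ = pg ≫ y :=
    Triangle.yoneda_exact₂ _ hg (ph ≫ φ) (by
      change g ≫ ph ≫ φ = 0
      rw [← Category.assoc, ← hc₁, Category.assoc, hfZ (c ≫ φ), comp_zero])
  obtain ⟨x, hx⟩ : ∃ x : X⟦(1 : ℤ)⟧ ⟶ Z, φ = dh ≫ x :=
    Triangle.yoneda_exact₃ _ hh φ (by
      change ph ≫ φ = 0
      rw [hy, hgZ y, comp_zero])
  obtain ⟨x', hx'⟩ : ∃ x' : Y⟦(1 : ℤ)⟧ ⟶ Z, x = f⟦(1 : ℤ)⟧' ≫ x' :=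
    yoneda_exact_shift_of_distTriang hf x (by
      rw [← hc₂, Category.assoc, ← hx]
      exact hfZ _)
  rw [hx, hx', reassoc_of% hc', hgZ (dg ≫ x'), comp_zero]

lemma exists_extension_to_cone_comp (hf : Triangle.mk f pf df ∈ distTriang C)
    (hg : Triangle.mk g pg dg ∈ distTriang C) (hh : Triangle.mk (f ≫ g) ph dh ∈ distTriang C)
    (c : Cf ⟶ Ch) (hc₁ : pf ≫ c = g ≫ ph) (hc₂ : c ≫ dh = df)
    (hZ : ∀ φ : Cg⟦(-1 : ℤ)⟧ ⟶ Z, φ = 0) (α : Cf ⟶ Z) : ∃ t : Ch ⟶ Z, c ≫ t = α := by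
  obtain ⟨β, hβ⟩ : ∃ β : W ⟶ Z, pf ≫ α = g ≫ β :=
    Triangle.yoneda_exact₂ _ (inv_rot_of_distTriang _ hg) (pf ≫ α) (hZ _)
  obtain ⟨t, ht⟩ : ∃ t : Ch ⟶ Z, β = ph ≫ t :=
    Triangle.yoneda_exact₂ _ hh β (by
      change (f ≫ g) ≫ β = 0
      have hfpf : f ≫ pf = 0 := comp_distTriang_mor_zero₁₂ _ hf
      rw [Category.assoc, ← hβ, ← Category.assoc, hfpf, zero_comp])
  obtain ⟨ε, hε⟩ : ∃ ε : X⟦(1 : ℤ)⟧ ⟶ Z, α - c ≫ t = df ≫ ε :=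
    Triangle.yoneda_exact₃ _ hf (α - c ≫ t) (by
      change pf ≫ (α - c ≫ t) = 0
      rw [Preadditive.comp_sub, reassoc_of% hc₁, hβ, ht, sub_self])
  exact ⟨t + dh ≫ ε, by rw [Preadditive.comp_add, reassoc_of% hc₂, ← hε, add_sub_cancel]⟩

lemma exists_lift_through_cone_comp (hf : Triangle.mk f pf df ∈ distTriang C)
    (hg : Triangle.mk g pg dg ∈ distTriang C) (hh : Triangle.mk (f ≫ g) ph dh ∈ distTriang C)
    (c' : Ch ⟶ Cg) (hc'₁ : ph ≫ c' = pg) (hc'₂ : dh ≫ f⟦(1 : ℤ)⟧' = c' ≫ dg)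
    (hZ : ∀ φ : Z ⟶ Cf⟦(1 : ℤ)⟧, φ = 0) (β : Z ⟶ Cg) : ∃ x : Z ⟶ Ch, x ≫ c' = β := by
  obtain ⟨ε, hε⟩ : ∃ ε : Z ⟶ X⟦(1 : ℤ)⟧, β ≫ dg = ε ≫ f⟦(1 : ℤ)⟧' :=
    coyoneda_exact_shift_of_distTriang hf (β ≫ dg) (hZ _)
  obtain ⟨x, hx⟩ : ∃ x : Z ⟶ Ch, ε = x ≫ dh :=
    Triangle.coyoneda_exact₁ _ hh ε (by
      have hdg : dg ≫ g⟦(1 : ℤ)⟧' = 0 := comp_distTriang_mor_zero₃₁ _ hg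
      change ε ≫ (f ≫ g)⟦(1 : ℤ)⟧' = 0
      rw [Functor.map_comp, ← Category.assoc, ← hε, Category.assoc, hdg, comp_zero])
  obtain ⟨y, hy⟩ : ∃ y : Z ⟶ W, β - x ≫ c' = y ≫ pg :=
    Triangle.coyoneda_exact₃ _ hg (β - x ≫ c') (by
      change (β - x ≫ c') ≫ dg = 0
      rw [Preadditive.sub_comp, Category.assoc, ← hc'₂, ← Category.assoc, ← hx, hε, sub_self])
  exact ⟨x + y ≫ ph, by rw [Preadditive.add_comp, Category.assoc, hc'₁, ← hy, add_sub_cancel]⟩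

end CategoryTheory.Pretriangulated

namespace WeightStructure

variable {C : Type*} [Category C] [HasZeroObject C] [Preadditive C]
    [HasShift C ℤ] [∀ n : ℤ, (shiftFunctor C n).Additive] [Pretriangulated C]
    (w : WeightStructure C)

section Basic

variable {X Y Z : C}

lemma leW_zero_iff : w.leW 0 X ↔ w.le X :=
  ⟨w.le_iso ((shiftFunctorZero' C (-0 : ℤ) (by simp)).app X),
    w.le_iso ((shiftFunctorZero' C (-0 : ℤ) (by simp)).app X).symm⟩

lemma geW_zero_iff : w.geW 0 X ↔ w.ge X :=
  ⟨w.ge_iso ((shiftFunctorZero' C (-0 : ℤ) (by simp)).app X),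
    w.ge_iso ((shiftFunctorZero' C (-0 : ℤ) (by simp)).app X).symm⟩

lemma leW_shift_s14 {a : ℤ} (h : w.leW a X) (n : ℤ) {b : ℤ} (hb : a + n = b) :
    w.leW b (X⟦n⟧) :=
  w.le_iso ((shiftFunctorAdd' C n (-b) (-a) (by omega)).app X) h

lemma geW_shift_s14 {a : ℤ} (h : w.geW a X) (n : ℤ) {b : ℤ} (hb : a + n = b) :
    w.geW b (X⟦n⟧) :=
  w.ge_iso ((shiftFunctorAdd' C n (-b) (-a) (by omega)).app X) h

lemma geW_anti_s14 {a b : ℤ} (hab : a ≤ b) (h : w.geW b X) : w.geW a X := by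
  induction a, hab using Int.leInductionDown with
  | base => exact h
  | pred a _ ih =>
    exact w.ge_iso ((shiftFunctorAdd' C (-a) 1 (-(a - 1)) (by ring)).app X).symm
      (w.ge_shift _ ih)

lemma hom_eq_zero_of_le_of_geW_one (hX : w.le X) (hY : w.geW 1 Y) (f : X ⟶ Y) : f = 0 := by
  have e : Y ≅ (Y⟦(-1 : ℤ)⟧)⟦(1 : ℤ)⟧ := (shiftEquiv C (1 : ℤ)).counitIso.symm.app Y
  simpa using congrArg (· ≫ e.inv) (w.orth (f ≫ e.hom) hX hY)

lemma hom_eq_zero {a b : ℤ} (hX : w.leW a X) (hY : w.geW b Y) (hab : a < b) (f : X ⟶ Y) :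
    f = 0 :=
  (shiftFunctor C (-a)).map_injective <| by
    rw [Functor.map_zero]
    exact w.hom_eq_zero_of_le_of_geW_one hX (w.geW_anti_s14 (by omega) (w.geW_shift_s14 hY (-a) rfl)) _

lemma le_of_hom_eq_zero (h : ∀ Z, w.geW 1 Z → ∀ f : X ⟶ Z, f = 0) : w.le X := by
  obtain ⟨A, B, f, g, δ, hT, hA, hB⟩ := w.exists_weight_filtration X
  obtain ⟨r, hr⟩ : ∃ r : X ⟶ A, 𝟙 X = r ≫ f :=
    Triangle.coyoneda_exact₂ _ hT (𝟙 X) ((Category.id_comp _).trans (h B hB g))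
  exact w.le_retract r f hr.symm hA

lemma geW_one_of_hom_eq_zero (h : ∀ Z, w.le Z → ∀ f : Z ⟶ X, f = 0) : w.geW 1 X := by
  obtain ⟨A, B, f, g, δ, hT, hA, hB⟩ := w.exists_weight_filtration X
  obtain ⟨s, hs⟩ : ∃ s : B ⟶ X, 𝟙 X = g ≫ s :=
    Triangle.yoneda_exact₂ _ hT (𝟙 X) ((Category.comp_id _).trans (h A hA f))
  exact w.ge_retract (g⟦(-1 : ℤ)⟧') (s⟦(-1 : ℤ)⟧')
    (by rw [← Functor.map_comp, ← hs, CategoryTheory.Functor.map_id]) hB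

end Basic

section Truncation

variable {X A Y Z : C} {a : X ⟶ A} {p : A ⟶ Y} {d : Y ⟶ X⟦(1 : ℤ)⟧} {n m : ℤ}

lemma exists_mor₂_comp_eq (hT : Triangle.mk a p d ∈ distTriang C) (hX : w.leW n X)
    (hZ : w.geW m Z) (hnm : n < m) (f : A ⟶ Z) : ∃ f₀ : Y ⟶ Z, p ≫ f₀ = f := by
  obtain ⟨f₀, hf₀⟩ : ∃ f₀ : Y ⟶ Z, f = p ≫ f₀ :=
    Triangle.yoneda_exact₂ _ hT f (w.hom_eq_zero hX hZ hnm _)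
  exact ⟨f₀, hf₀.symm⟩

lemma eq_zero_of_mor₂_comp_eq_zero (hT : Triangle.mk a p d ∈ distTriang C) (hX : w.leW n X)
    (hZ : w.geW m Z) (hnm : n + 1 < m) {f₀ : Y ⟶ Z} (h : p ≫ f₀ = 0) : f₀ = 0 := by
  obtain ⟨g, rfl⟩ : ∃ g : X⟦(1 : ℤ)⟧ ⟶ Z, f₀ = d ≫ g := Triangle.yoneda_exact₃ _ hT f₀ h
  rw [w.hom_eq_zero (w.leW_shift_s14 hX 1 rfl) hZ hnm g, comp_zero]

lemma exists_comp_mor₁_eq (hT : Triangle.mk a p d ∈ distTriang C) (hY : w.geW m Y)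
    (hZ : w.leW n Z) (hnm : n < m) (f : Z ⟶ A) : ∃ f₀ : Z ⟶ X, f₀ ≫ a = f := by
  obtain ⟨f₀, hf₀⟩ : ∃ f₀ : Z ⟶ X, f = f₀ ≫ a :=
    Triangle.coyoneda_exact₂ _ hT f (w.hom_eq_zero hZ hY hnm _)
  exact ⟨f₀, hf₀.symm⟩

lemma eq_zero_of_comp_mor₁_eq_zero (hT : Triangle.mk a p d ∈ distTriang C) (hY : w.geW m Y)
    (hZ : w.leW n Z) (hnm : n + 1 < m) {f₀ : Z ⟶ X} (h : f₀ ≫ a = 0) : f₀ = 0 := by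
  obtain ⟨g, hg⟩ := Triangle.coyoneda_exact₂ _ (inv_rot_of_distTriang _ hT) f₀ h
  rw [hg, w.hom_eq_zero hZ (w.geW_shift_s14 hY (-1) rfl) (by omega) g]
  exact zero_comp

end Truncation

lemma exists_iso_mor₂_comp_eq {X₁ X₂ A Y₁ Y₂ : C} {a₁ : X₁ ⟶ A} {p₁ : A ⟶ Y₁}
    {d₁ : Y₁ ⟶ X₁⟦(1 : ℤ)⟧} {a₂ : X₂ ⟶ A} {p₂ : A ⟶ Y₂} {d₂ : Y₂ ⟶ X₂⟦(1 : ℤ)⟧} {n m : ℤ}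
    (hT₁ : Triangle.mk a₁ p₁ d₁ ∈ distTriang C) (hT₂ : Triangle.mk a₂ p₂ d₂ ∈ distTriang C)
    (hX₁ : w.leW n X₁) (hX₂ : w.leW n X₂) (hY₁ : w.geW m Y₁) (hY₂ : w.geW m Y₂)
    (hnm : n + 1 < m) : ∃ e : Y₁ ≅ Y₂, p₁ ≫ e.hom = p₂ := by
  obtain ⟨f, hf⟩ := w.exists_mor₂_comp_eq hT₁ hX₁ hY₂ (by omega) p₂
  obtain ⟨g, hg⟩ := w.exists_mor₂_comp_eq hT₂ hX₂ hY₁ (by omega) p₁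
  refine ⟨⟨f, g, ?_, ?_⟩, hf⟩
  · refine sub_eq_zero.1 (w.eq_zero_of_mor₂_comp_eq_zero hT₁ hX₁ hY₁ hnm ?_)
    rw [Preadditive.comp_sub, reassoc_of% hf, hg, Category.comp_id, sub_self]
  · refine sub_eq_zero.1 (w.eq_zero_of_mor₂_comp_eq_zero hT₂ hX₂ hY₂ hnm ?_)
    rw [Preadditive.comp_sub, reassoc_of% hg, hf, Category.comp_id, sub_self]

lemma exists_iso_comp_mor₁_eq {X₁ X₂ B Y₁ Y₂ : C} {i₁ : X₁ ⟶ B} {q₁ : B ⟶ Y₁}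
    {d₁ : Y₁ ⟶ X₁⟦(1 : ℤ)⟧} {i₂ : X₂ ⟶ B} {q₂ : B ⟶ Y₂} {d₂ : Y₂ ⟶ X₂⟦(1 : ℤ)⟧} {n m : ℤ}
    (hT₁ : Triangle.mk i₁ q₁ d₁ ∈ distTriang C) (hT₂ : Triangle.mk i₂ q₂ d₂ ∈ distTriang C)
    (hY₁ : w.geW m Y₁) (hY₂ : w.geW m Y₂) (hX₁ : w.leW n X₁) (hX₂ : w.leW n X₂)
    (hnm : n + 1 < m) : ∃ e : X₁ ≅ X₂, e.hom ≫ i₂ = i₁ := by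
  obtain ⟨f, hf⟩ := w.exists_comp_mor₁_eq hT₂ hY₂ hX₁ (by omega) i₁
  obtain ⟨g, hg⟩ := w.exists_comp_mor₁_eq hT₁ hY₁ hX₂ (by omega) i₂
  refine ⟨⟨f, g, ?_, ?_⟩, hf⟩
  · refine sub_eq_zero.1 (w.eq_zero_of_comp_mor₁_eq_zero hT₁ hY₁ hX₁ hnm ?_)
    rw [Preadditive.sub_comp, Category.assoc, hg, hf, Category.id_comp, sub_self]
  · refine sub_eq_zero.1 (w.eq_zero_of_comp_mor₁_eq_zero hT₂ hY₂ hX₂ hnm ?_)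
    rw [Preadditive.sub_comp, Category.assoc, hf, hg, Category.id_comp, sub_self]

section CompositeTriangle

variable {A B E E' E'' : C} {u : A ⟶ B} {g : B ⟶ E} {h : E ⟶ A⟦(1 : ℤ)⟧}
    {e₁ : E' ⟶ E} {e₂ : E ⟶ E''} {e₃ : E'' ⟶ E'⟦(1 : ℤ)⟧}

lemma exists_ge_quotient (hB : w.ge B) (hT : Triangle.mk u g h ∈ distTriang C)
    (hS : Triangle.mk e₁ e₂ e₃ ∈ distTriang C) (hE'' : w.geW 2 E'') :
    ∃ (N : C) (ν : A ⟶ N) (m : N ⟶ B),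
      (∃ (a : E'⟦(-1 : ℤ)⟧ ⟶ A) (d : N ⟶ E'⟦(-1 : ℤ)⟧⟦(1 : ℤ)⟧),
        Triangle.mk a ν d ∈ distTriang C) ∧ w.ge N ∧ ν ≫ m = u ∧
      ∀ Z, w.le Z → ∀ β : Z ⟶ B, ∃ x : Z ⟶ N, x ≫ m = β := by
  obtain ⟨N, ν, d, hN⟩ := distinguished_cocone_triangle₂ (e₁ ≫ h)
  obtain ⟨m, hνm, hdm⟩ : ∃ m : N ⟶ B, ν ≫ m = 𝟙 A ≫ u ∧ d ≫ e₁ = m ≫ g :=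
    complete_distinguished_triangle_morphism₂ _ _ hN hT (𝟙 A) e₁ (by
      change (e₁ ≫ h) ≫ (𝟙 A)⟦(1 : ℤ)⟧' = e₁ ≫ h
      rw [CategoryTheory.Functor.map_id, Category.comp_id])
  rw [Category.id_comp] at hνm
  have hT₂ : Triangle.mk h (-(u⟦(1 : ℤ)⟧')) (-(g⟦(1 : ℤ)⟧')) ∈ distTriang C :=
    rot_of_distTriang _ (rot_of_distTriang _ hT)
  have hN₂ : Triangle.mk (e₁ ≫ h) (-(ν⟦(1 : ℤ)⟧')) (-(d⟦(1 : ℤ)⟧')) ∈ distTriang C :=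
    rot_of_distTriang _ (rot_of_distTriang _ hN)
  have hNge : w.ge N := w.ge_iso ((shiftEquiv C (1 : ℤ)).unitIso.symm.app N) <|
    w.geW_one_of_hom_eq_zero fun Z hZ => hom_to_cone_comp_eq_zero hS hT₂ hN₂
      (w.hom_eq_zero ((w.leW_zero_iff).2 hZ) hE'' (by norm_num))
      (w.hom_eq_zero ((w.leW_zero_iff).2 hZ) (w.geW_shift_s14 ((w.geW_zero_iff).2 hB) 1 rfl)
        (by norm_num))
  refine ⟨N, ν, m, ⟨_, _, inv_rot_of_distTriang _ hN⟩, hNge, hνm, fun Z hZ β => ?_⟩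
  obtain ⟨x, hx⟩ := exists_lift_through_cone_comp hS hT₂ hN₂ (m⟦(1 : ℤ)⟧')
    (by rw [Preadditive.neg_comp, ← Functor.map_comp, hνm])
    (by rw [Preadditive.neg_comp, Preadditive.comp_neg, ← Functor.map_comp, ← Functor.map_comp,
      hdm])
    (w.hom_eq_zero (w.leW_shift_s14 ((w.leW_zero_iff).2 hZ) 1 rfl) (w.geW_shift_s14 hE'' 1 rfl)
      (by norm_num)) (β⟦(1 : ℤ)⟧')
  exact ⟨(shiftFunctor C (1 : ℤ)).preimage x, (shiftFunctor C (1 : ℤ)).map_injective (by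
    rw [Functor.map_comp, Functor.map_preimage, hx])⟩

lemma exists_le_sub (hA : w.le A) (hT : Triangle.mk u g h ∈ distTriang C)
    (hS : Triangle.mk e₁ e₂ e₃ ∈ distTriang C) (hE' : w.leW (-1) E') :
    ∃ (F : C) (ι : F ⟶ B) (μ : A ⟶ F),
      (∃ δ : E'' ⟶ F⟦(1 : ℤ)⟧, Triangle.mk ι (g ≫ e₂) δ ∈ distTriang C) ∧ w.le F ∧
      μ ≫ ι = u ∧ ∀ Z, w.ge Z → ∀ α : A ⟶ Z, ∃ t : F ⟶ Z, μ ≫ t = α := by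
  obtain ⟨F, ι, δ, hF⟩ := distinguished_cocone_triangle₁ (g ≫ e₂)
  obtain ⟨μ, hμι, hμδ⟩ : ∃ μ : A ⟶ F, u ≫ 𝟙 B = μ ≫ ι ∧ h ≫ μ⟦(1 : ℤ)⟧' = e₂ ≫ δ :=
    complete_distinguished_triangle_morphism₁ _ _ hT hF (𝟙 B) e₂ (Category.id_comp _).symm
  rw [Category.comp_id] at hμι
  have hT₁ : Triangle.mk g h (-(u⟦(1 : ℤ)⟧')) ∈ distTriang C := rot_of_distTriang _ hT
  have hS₁ : Triangle.mk e₂ e₃ (-(e₁⟦(1 : ℤ)⟧')) ∈ distTriang C := rot_of_distTriang _ hS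
  have hF₁ : Triangle.mk (g ≫ e₂) δ (-(ι⟦(1 : ℤ)⟧')) ∈ distTriang C := rot_of_distTriang _ hF
  have hFle : w.le F := w.le_of_hom_eq_zero fun Z hZ φ =>
    (shiftFunctor C (1 : ℤ)).map_injective <| by
      rw [Functor.map_zero]
      exact hom_from_cone_comp_eq_zero hT₁ hS₁ hF₁
        (w.hom_eq_zero (w.leW_shift_s14 ((w.leW_zero_iff).2 hA) 1 rfl) (w.geW_shift_s14 hZ 1 rfl)
          (by norm_num))
        (w.hom_eq_zero (w.leW_shift_s14 hE' 1 rfl) (w.geW_shift_s14 hZ 1 rfl) (by norm_num)) _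
  refine ⟨F, ι, μ, ⟨δ, hF⟩, hFle, hμι.symm, fun Z hZ α => ?_⟩
  obtain ⟨t, ht⟩ := exists_extension_to_cone_comp hT₁ hS₁ hF₁ (μ⟦(1 : ℤ)⟧') hμδ
    (by rw [Preadditive.comp_neg, ← Functor.map_comp, ← hμι])
    (w.hom_eq_zero (w.leW_shift_s14 (w.leW_shift_s14 hE' 1 rfl) (-1) rfl)
      (w.geW_shift_s14 ((w.geW_zero_iff).2 hZ) 1 rfl) (by norm_num)) (α⟦(1 : ℤ)⟧')
  exact ⟨(shiftFunctor C (1 : ℤ)).preimage t, (shiftFunctor C (1 : ℤ)).map_injective (by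
    rw [Functor.map_comp, Functor.map_preimage, ht])⟩

end CompositeTriangle

lemma exists_iso_of_lift_of_extension {A B N F X Y : C} {a : X ⟶ A} {ν : A ⟶ N}
    {d : N ⟶ X⟦(1 : ℤ)⟧} {ι : F ⟶ B} {q : B ⟶ Y} {δ : Y ⟶ F⟦(1 : ℤ)⟧} {m : N ⟶ B}
    {μ : A ⟶ F} (hA : w.le A) (hTN : Triangle.mk a ν d ∈ distTriang C) (hX : w.leW (-2) X)
    (hN : w.ge N) (hTF : Triangle.mk ι q δ ∈ distTriang C) (hY : w.geW 2 Y) (hF : w.le F)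
    (hνm : ν ≫ m = μ ≫ ι) (hm : ∀ Z, w.le Z → ∀ β : Z ⟶ B, ∃ x : Z ⟶ N, x ≫ m = β)
    (hμ : ∀ Z, w.ge Z → ∀ α : A ⟶ Z, ∃ t : F ⟶ Z, μ ≫ t = α) :
    ∃ χ : N ≅ F, χ.hom ≫ ι = m := by
  have hA' := (w.leW_zero_iff).2 hA
  have hNle : w.le N := w.le_of_hom_eq_zero fun Z hZ f =>
    w.eq_zero_of_mor₂_comp_eq_zero hTN hX hZ (by norm_num) (w.hom_eq_zero hA' hZ (by norm_num) _)
  obtain ⟨χ, hχ⟩ := w.exists_comp_mor₁_eq hTF hY ((w.leW_zero_iff).2 hNle) (by norm_num) m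
  have hνχ : ν ≫ χ = μ := sub_eq_zero.1 <| w.eq_zero_of_comp_mor₁_eq_zero hTF hY hA'
    (by norm_num) (by rw [Preadditive.sub_comp, Category.assoc, hχ, hνm, sub_self])
  obtain ⟨x, hx⟩ := hm F hF ι
  obtain ⟨t, ht⟩ := hμ N hN ν
  have hxχ : x ≫ χ = 𝟙 F := sub_eq_zero.1 <| w.eq_zero_of_comp_mor₁_eq_zero hTF hY
    ((w.leW_zero_iff).2 hF) (by norm_num)
    (by rw [Preadditive.sub_comp, Category.assoc, hχ, hx, Category.id_comp, sub_self])
  have hχt : χ ≫ t = 𝟙 N := sub_eq_zero.1 <| w.eq_zero_of_mor₂_comp_eq_zero hTN hX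
    ((w.geW_zero_iff).2 hN) (by norm_num)
    (by rw [Preadditive.comp_sub, reassoc_of% hνχ, ht, Category.comp_id, sub_self])
  have htx : t = x := by rw [← Category.id_comp t, ← hxχ, Category.assoc, hχt, Category.comp_id]
  exact ⟨⟨χ, x, htx ▸ hχt, hxχ⟩, hχ⟩

lemma exists_retraction_of_factorization {A A₀ Am B B₀ Bp M : C} {a₁ : Am ⟶ A}
    {pA : A ⟶ A₀} {dA : A₀ ⟶ Am⟦(1 : ℤ)⟧} {iB : B₀ ⟶ B} {b₂ : B ⟶ Bp}
    {dB : Bp ⟶ B₀⟦(1 : ℤ)⟧} (hA : w.le A) (hTA : Triangle.mk a₁ pA dA ∈ distTriang C)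
    (hAm : w.leW (-2) Am) (hA₀ : w.ge A₀) (hTB : Triangle.mk iB b₂ dB ∈ distTriang C)
    (hBp : w.geW 2 Bp) (φ : A₀ ≅ B₀) (hM : w.heart M) {p : A ⟶ M} {q : M ⟶ B}
    (hpq : p ≫ q = pA ≫ φ.hom ≫ iB) :
    ∃ (s : A₀ ⟶ M) (r : M ⟶ A₀), s ≫ r = 𝟙 A₀ ∧ p ≫ r = pA ∧ s ≫ q = φ.hom ≫ iB := by
  obtain ⟨s, hs⟩ := w.exists_mor₂_comp_eq hTA hAm ((w.geW_zero_iff).2 hM.2) (by norm_num) p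
  obtain ⟨t, ht⟩ := w.exists_comp_mor₁_eq hTB hBp ((w.leW_zero_iff).2 hM.1) (by norm_num) q
  have hst : s ≫ t = φ.hom := sub_eq_zero.1 <|
    w.eq_zero_of_mor₂_comp_eq_zero hTA hAm ((w.geW_zero_iff).2 (w.ge_iso φ hA₀)) (by norm_num) <|
      w.eq_zero_of_comp_mor₁_eq_zero hTB hBp ((w.leW_zero_iff).2 hA) (by norm_num) <| by
        rw [Preadditive.comp_sub, Preadditive.sub_comp, Category.assoc, Category.assoc,
          Category.assoc, ht, reassoc_of% hs, hpq, sub_self]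
  refine ⟨s, t ≫ φ.inv, by rw [reassoc_of% hst, φ.hom_inv_id], ?_, by rw [← ht, reassoc_of% hst]⟩
  rw [← hs, Category.assoc, reassoc_of% hst, φ.hom_inv_id, Category.comp_id]

end WeightStructure

/-- **Theorem 2I, abstract form (cf. [W4, Cor. 2.5]).** Let `A ∈ C_{w≤0}`, `B ∈ C_{w≥0}`,
`u : A → B`, and suppose there is a distinguished triangle `A → B → E → A[1]` with first
map `u` in which `E` is without weights `0` and `1`. Then `A` is without weight `-1`,
`B` is without weight `1`, the induced morphism `Gr₀(u) : Gr₀ A → Gr₀ B` is an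
isomorphism, and for any factorization `A → M → B` of `u` with `M` in the heart, `Gr₀ A`
is canonically a direct factor of `M`, compatibly with the factorization. -/
theorem gr_zero_iso_and_direct_factor
    {C : Type*} [Category C] [HasZeroObject C] [Preadditive C]
    [HasShift C ℤ] [∀ n : ℤ, (shiftFunctor C n).Additive] [Pretriangulated C]
    (w : WeightStructure C)
    (A B E : C) (hA : w.le A) (hB : w.ge B)
    (u : A ⟶ B) (g : B ⟶ E) (h : E ⟶ A⟦(1 : ℤ)⟧)
    (hT : Triangle.mk u g h ∈ distTriang C)
    (hE : w.WithoutWeights 0 1 E) :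
    w.WithoutWeights (-1) (-1) A ∧
    w.WithoutWeights 1 1 B ∧
    (∀ (Am A₀ : C) (a₁ : Am ⟶ A) (pA : A ⟶ A₀) (dA : A₀ ⟶ Am⟦(1 : ℤ)⟧),
      (Triangle.mk a₁ pA dA ∈ distTriang C) → w.leW (-2) Am → w.ge A₀ →
      ∀ (B₀ Bp : C) (iB : B₀ ⟶ B) (b₂ : B ⟶ Bp) (dB : Bp ⟶ B₀⟦(1 : ℤ)⟧),
        (Triangle.mk iB b₂ dB ∈ distTriang C) → w.le B₀ → w.geW 2 Bp →
        ∃ φ : A₀ ≅ B₀, pA ≫ φ.hom ≫ iB = u ∧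
          ∀ (M : C), w.heart M → ∀ (p : A ⟶ M) (q : M ⟶ B), p ≫ q = u →
            ∃ (s : A₀ ⟶ M) (r : M ⟶ A₀),
              s ≫ r = 𝟙 A₀ ∧ p ≫ r = pA ∧ s ≫ q = φ.hom ≫ iB) := by
  obtain ⟨E', E'', e₁, e₂, e₃, hS, hE', hE''⟩ := hE
  obtain ⟨N, ν, m, ⟨a, d, hTN⟩, hN, hνm, hm⟩ := w.exists_ge_quotient hB hT hS hE''
  obtain ⟨F, ι, μ, ⟨δ, hTF⟩, hF, hμι, hμ⟩ := w.exists_le_sub hA hT hS hE'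
  have hX : w.leW (-2) (E'⟦(-1 : ℤ)⟧) := w.leW_shift_s14 hE' (-1) (by norm_num)
  obtain ⟨χ, hχ⟩ := w.exists_iso_of_lift_of_extension hA hTN hX hN hTF hE'' hF
    (hνm.trans hμι.symm) hm hμ
  refine ⟨⟨_, _, a, ν, d, hTN, hX, (w.geW_zero_iff).2 hN⟩,
    ⟨_, _, ι, g ≫ e₂, δ, hTF, (w.leW_zero_iff).2 hF, hE''⟩, ?_⟩
  intro Am A₀ a₁ pA dA hTA hAm hA₀ B₀ Bp iB b₂ dB hTB hB₀ hBp
  obtain ⟨θ, hθ⟩ := w.exists_iso_mor₂_comp_eq hTA hTN hAm hX ((w.geW_zero_iff).2 hA₀)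
    ((w.geW_zero_iff).2 hN) (by norm_num)
  obtain ⟨η, hη⟩ := w.exists_iso_comp_mor₁_eq hTF hTB hE'' hBp ((w.leW_zero_iff).2 hF)
    ((w.leW_zero_iff).2 hB₀) (by norm_num)
  have hφ : pA ≫ (θ ≪≫ χ ≪≫ η).hom ≫ iB = u := by
    simp only [Iso.trans_hom, Category.assoc, hη, hχ, reassoc_of% hθ, hνm]
  exact ⟨θ ≪≫ χ ≪≫ η, hφ, fun M hM p q hpq =>
    w.exists_retraction_of_factorization hA hTA hAm hA₀ hTB hBp _ hM (hpq.trans hφ.symm)⟩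
end

section
/- Let C be a pretriangulated category with weight structure, let A ∈ C_{w≤0} and B ∈ C_{w≥0}, and let u : A → B be any morphism. Then u factors as A → M → B with M an object of the heart C_{w=0}, pure of weight zero. (The factorization principle stated in the introduction: the axioms of a weight structure formally imply that any morphism from an object of weights ≤ 0 to an object of weights ≥ 0 factors over an object pure of weight zero.) -/
set_option linter.unusedVariables false

open CategoryTheory Limits Pretriangulated

universe w₁ w₂ w₃ w₄ v₁ v₂ v₃ v₄ u₁ u₂ u₃ u₄

/-!
Take a weight decomposition `X → A[1] → Y → X[1]` of `A[1]` and shift it back to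
`X[-1] → A → Y[-1] → X`. Since `X[-1]` has weights `≤ -1` and `B` weights `≥ 0`, `u` kills
`X[-1]` and hence factors through `Y[-1]`. This object lies in `C_{w≥0}` by construction and in
`C_{w≤0}` because it is an extension of `X` by `A`, and `C_{w≤0}` is extension-closed by
orthogonality and retract-closedness.
-/

namespace WeightStructure

variable {C : Type*} [Category C] [HasZeroObject C] [Preadditive C]
    [HasShift C ℤ] [∀ n : ℤ, (shiftFunctor C n).Additive] [Pretriangulated C]
    (w : WeightStructure C)

lemma hom_eq_zero_of_le_of_geW_one_s17 {P Q : C} (hP : w.le P) (hQ : w.geW 1 Q) (f : P ⟶ Q) :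
    f = 0 := by
  let e : Q⟦(-1 : ℤ)⟧⟦(1 : ℤ)⟧ ≅ Q := (shiftEquiv C (1 : ℤ)).counitIso.app Q
  simpa using w.orth (f ≫ e.inv) hP hQ =≫ e.hom

lemma hom_eq_zero_of_le_shift_one_of_ge {P Q : C} (hP : w.le (P⟦(1 : ℤ)⟧)) (hQ : w.ge Q)
    (f : P ⟶ Q) : f = 0 :=
  (shiftFunctor C (1 : ℤ)).map_injective (by simpa using w.orth (f⟦(1 : ℤ)⟧') hP hQ)

lemma le_of_distinguished {T : Triangle C} (hT : T ∈ distTriang C)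
    (h₁ : w.le T.obj₁) (h₃ : w.le T.obj₃) : w.le T.obj₂ := by
  obtain ⟨X, Y, f, g, h, hXY, hX, hY⟩ := w.exists_weight_filtration T.obj₂
  have hg : g = 0 := by
    obtain ⟨t, rfl⟩ := Triangle.yoneda_exact₂ T hT g
      (w.hom_eq_zero_of_le_of_geW_one_s17 h₁ hY _)
    rw [w.hom_eq_zero_of_le_of_geW_one_s17 h₃ hY t, Limits.comp_zero]
  -- `g = 0` makes `f` a split epimorphism, so `T.obj₂` is a retract of `X`.
  obtain ⟨r, hr⟩ := Triangle.coyoneda_exact₂ _ hXY (𝟙 T.obj₂) ((Category.id_comp g).trans hg)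
  exact w.le_retract r f hr.symm hX

end WeightStructure

/-- **Factorization through the heart.** In a pretriangulated category with a weight
structure, any morphism `u : A → B` with `A ∈ C_{w≤0}` and `B ∈ C_{w≥0}` factors through
an object `M` of the heart, pure of weight zero. -/
theorem morphism_factors_through_heart
    {C : Type*} [Category C] [HasZeroObject C] [Preadditive C]
    [HasShift C ℤ] [∀ n : ℤ, (shiftFunctor C n).Additive] [Pretriangulated C]
    (w : WeightStructure C)
    (A B : C) (hA : w.le A) (hB : w.ge B) (u : A ⟶ B) :
    ∃ (M : C) (p : A ⟶ M) (q : M ⟶ B), w.heart M ∧ p ≫ q = u := by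
  obtain ⟨X, Y, f, g, h, hXY, hX, hY⟩ := w.exists_weight_filtration (A⟦(1 : ℤ)⟧)
  let T := (shiftFunctor (Triangle C) (-1 : ℤ)).obj (Triangle.mk f g h)
  have hT : T ∈ distTriang C := Triangle.shift_distinguished _ hXY (-1)
  let e : A ≅ T.obj₂ := (shiftEquiv C (1 : ℤ)).unitIso.app A
  have hX' : w.le (X⟦(-1 : ℤ)⟧⟦(1 : ℤ)⟧) :=
    w.le_iso ((shiftEquiv C (1 : ℤ)).counitIso.app X).symm hX
  obtain ⟨q, hq⟩ := Triangle.yoneda_exact₂ T hT (e.inv ≫ u)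
    (w.hom_eq_zero_of_le_shift_one_of_ge hX' hB _)
  refine ⟨T.obj₃, e.hom ≫ T.mor₂, q, ⟨?_, hY⟩, by simp [← hq]⟩
  exact w.le_of_distinguished (rot_of_distTriang _ hT) (w.le_iso e hA) hX'
end

section
/- Let C(U), C(X), C(Z) be pretriangulated categories related by gluing. Then for every object M_U of C(U) there is an isomorphism i^!(j_! M_U) ≅ (i^* j_* M_U)[−1], natural in M_U; that is, the functors i^! ∘ j_! and (i^* ∘ j_*)[−1] from C(U) to C(Z) are isomorphic. (The identity i^! ∘ j_! ≅ i^* ∘ j_* [−1] used in Remark 0Ca.) -/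
set_option linter.unusedVariables false

open CategoryTheory Limits Pretriangulated

universe w₁ w₂ w₃ w₄ v₁ v₂ v₃ v₄ u₁ u₂ u₃ u₄

variable {CU : Type*} [Category CU] [HasZeroObject CU] [Preadditive CU]
  [HasShift CU ℤ] [∀ n : ℤ, (shiftFunctor CU n).Additive] [Pretriangulated CU]
variable {CX : Type*} [Category CX] [HasZeroObject CX] [Preadditive CX]
  [HasShift CX ℤ] [∀ n : ℤ, (shiftFunctor CX n).Additive] [Pretriangulated CX]
variable {CZ : Type*} [Category CZ] [HasZeroObject CZ] [Preadditive CZ]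
  [HasShift CZ ℤ] [∀ n : ℤ, (shiftFunctor CZ n).Additive] [Pretriangulated CZ]

/- The six gluing functors: `jl = j_!`, `js = j^*`, `jr = j_*`,
   `il = i^*`, `im = i_*`, `ir = i^!`; all of them are exact. -/
variable (jl : CU ⥤ CX) (js : CX ⥤ CU) (jr : CU ⥤ CX)
  (il : CX ⥤ CZ) (im : CZ ⥤ CX) (ir : CX ⥤ CZ)
  [jl.CommShift ℤ] [jl.IsTriangulated] [js.CommShift ℤ] [js.IsTriangulated]
  [jr.CommShift ℤ] [jr.IsTriangulated] [il.CommShift ℤ] [il.IsTriangulated]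
  [im.CommShift ℤ] [im.IsTriangulated] [ir.CommShift ℤ] [ir.IsTriangulated]
  [im.Full] [im.Faithful]
variable (adj₁ : jl ⊣ js) (adj₂ : js ⊣ jr) (adj₃ : il ⊣ im) (adj₄ : im ⊣ ir)

variable (wU : WeightStructure CU) (wX : WeightStructure CX) (wZ : WeightStructure CZ)

/-!
The canonical map `φ : j_! ⟶ j_*` of the adjoint triple `j_! ⊣ j^* ⊣ j_*` is the middle edge of
two distinguished triangles: the localization triangle of `j_! M` gives
`i_* i^! j_! M → j_! M → j_* M → (i_* i^! j_! M)[1]` and that of `j_* M` gives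
`j_! M → j_* M → i_* i^* j_* M → (j_! M)[1]`. So `(i_* i^! j_! M)[1]` and `i_* i^* j_* M` are both
cones of `φ_M`, hence isomorphic. Since `j^* i_* = 0`, there are no nonzero morphisms from
`j_!`-objects to `i_*`-objects nor from `i_*`-objects to `j_*`-objects; this makes the third
component of any morphism between these triangles unique, so the comparison isomorphisms are
natural. Full faithfulness of `i_*` then strips off `i_*`.
-/

open Functor

namespace CategoryTheory

lemma Adjunction.eq_zero_of_isZero_right_obj {C D : Type*} [Category C] [Category D]
    [HasZeroMorphisms D] {L : C ⥤ D} {R : D ⥤ C} (adj : L ⊣ R)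
    {X : C} {Y : D} (hY : IsZero (R.obj Y)) (g : L.obj X ⟶ Y) : g = 0 :=
  (adj.homEquiv X Y).injective (hY.eq_of_tgt _ _)

lemma Adjunction.eq_zero_of_isZero_left_obj {C D : Type*} [Category C] [Category D]
    [HasZeroMorphisms C] {L : C ⥤ D} {R : D ⥤ C} (adj : L ⊣ R)
    {X : C} {Y : D} (hX : IsZero (L.obj X)) (g : X ⟶ R.obj Y) : g = 0 :=
  (adj.homEquiv X Y).symm.injective (hX.eq_of_src _ _)

lemma Functor.eq_zero_of_forall_obj_shift_eq_zero {A B : Type*} [Category A] [Category B]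
    [HasShift A ℤ] [HasShift B ℤ] [HasZeroMorphisms B] (F : A ⥤ B) [F.CommShift ℤ] (n : ℤ)
    {M : A} {Y : B} (h : ∀ g : F.obj (M⟦n⟧) ⟶ Y, g = 0) (g : (F.obj M)⟦n⟧ ⟶ Y) : g = 0 := by
  rw [← cancel_epi ((F.commShiftIso n).app M).hom, h (_ ≫ g), comp_zero]

noncomputable def Functor.FullyFaithful.isoCompShiftOfIso {J A B : Type*} [Category J]
    [Category A] [Category B] [HasShift A ℤ] [HasShift B ℤ] {G : A ⥤ B} (hG : G.FullyFaithful)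
    [G.CommShift ℤ] {P Q : J ⥤ A} {a b : ℤ} (hab : a + b = 0)
    (e : (P ⋙ G) ⋙ shiftFunctor B a ≅ Q ⋙ G) : P ≅ Q ⋙ shiftFunctor A b :=
  (hG.whiskeringRight J).preimageIso
    (isoWhiskerLeft (P ⋙ G) (shiftFunctorCompIsoId B a b hab).symm ≪≫
      isoWhiskerRight e (shiftFunctor B b) ≪≫ isoWhiskerLeft Q (G.commShiftIso b).symm)

section

variable {C : Type*} [Category C] [HasZeroObject C] [Preadditive C] [HasShift C ℤ]
  [∀ n : ℤ, (shiftFunctor C n).Additive] [Pretriangulated C]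

namespace Pretriangulated

lemma mk_distinguished_of_iso₁ {X X' Y Z : C} {f : X ⟶ Y} {g : Y ⟶ Z} {h : Z ⟶ X⟦(1 : ℤ)⟧}
    (hT : Triangle.mk f g h ∈ distTriang C) (e : X ≅ X') {f' : X' ⟶ Y} (hf : e.hom ≫ f' = f) :
    Triangle.mk f' g (h ≫ e.hom⟦(1 : ℤ)⟧') ∈ distTriang C :=
  -- the ascriptions unfold the objects of `Triangle.mk`, which `simp` does not see through
  isomorphic_distinguished _ hT _
    (Triangle.isoMk _ _ e.symm (Iso.refl Y) (Iso.refl Z)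
      (by simp [← hf] : f' ≫ 𝟙 Y = e.inv ≫ f) (by simp : g ≫ 𝟙 Z = 𝟙 Y ≫ g)
      (by simp [← Functor.map_comp] : (h ≫ e.hom⟦(1 : ℤ)⟧') ≫ e.inv⟦(1 : ℤ)⟧' = 𝟙 Z ≫ h))

lemma mk_distinguished_of_iso₃ {X Y Z Z' : C} {f : X ⟶ Y} {g : Y ⟶ Z} {h : Z ⟶ X⟦(1 : ℤ)⟧}
    (hT : Triangle.mk f g h ∈ distTriang C) (e : Z' ≅ Z) {g' : Y ⟶ Z'} (hg : g' ≫ e.hom = g) :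
    Triangle.mk f g' (e.hom ≫ h) ∈ distTriang C :=
  isomorphic_distinguished _ hT _
    (Triangle.isoMk _ _ (Iso.refl X) (Iso.refl Y) e
      (by simp : f ≫ 𝟙 Y = 𝟙 X ≫ f) (by simp [← hg] : g' ≫ e.hom = 𝟙 Y ≫ g)
      (by simp : (e.hom ≫ h) ≫ (𝟙 X)⟦(1 : ℤ)⟧' = e.hom ≫ h))

lemma ext_of_mor₂_comp_eq {T : Triangle C} (hT : T ∈ distTriang C) {Y : C}
    (hY : ∀ g : T.obj₁⟦(1 : ℤ)⟧ ⟶ Y, g = 0) {x x' : T.obj₃ ⟶ Y}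
    (h : T.mor₂ ≫ x = T.mor₂ ≫ x') : x = x' := by
  obtain ⟨g, hg⟩ :=
    Triangle.yoneda_exact₃ T hT (x - x') (by rw [Preadditive.comp_sub, h, sub_self])
  rwa [hY g, comp_zero, sub_eq_zero] at hg

lemma ext_of_comp_mor₃_eq {T : Triangle C} (hT : T ∈ distTriang C) {Y : C}
    (hY : ∀ g : Y ⟶ T.obj₂, g = 0) {x x' : Y ⟶ T.obj₃}
    (h : x ≫ T.mor₃ = x' ≫ T.mor₃) : x = x' := by
  obtain ⟨g, hg⟩ :=
    Triangle.coyoneda_exact₃ T hT (x - x') (by rw [Preadditive.sub_comp, h, sub_self])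
  rwa [hY g, zero_comp, sub_eq_zero] at hg

lemma hom₃_eq_of_comm₂_of_comm₃ {T T' : Triangle C} (hT : T ∈ distTriang C)
    (hT' : T' ∈ distTriang C) (a : T.obj₁ ⟶ T'.obj₁) (b : T.obj₂ ⟶ T'.obj₂)
    (hab : T.mor₁ ≫ b = a ≫ T'.mor₁) (h₁ : ∀ g : T.obj₁⟦(1 : ℤ)⟧ ⟶ T'.obj₃, g = 0)
    (h₂ : ∀ g : T.obj₃ ⟶ T'.obj₂, g = 0) {c c' : T.obj₃ ⟶ T'.obj₃}
    (hc : T.mor₂ ≫ c = b ≫ T'.mor₂) (hc' : c' ≫ T'.mor₃ = T.mor₃ ≫ a⟦(1 : ℤ)⟧') : c = c' := by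
  obtain ⟨c₀, hc₀₂, hc₀₃⟩ := complete_distinguished_triangle_morphism T T' hT hT' a b hab
  exact (ext_of_mor₂_comp_eq hT h₁ (hc.trans hc₀₂.symm)).trans
    (ext_of_comp_mor₃_eq hT' h₂ (hc₀₃.symm.trans hc'.symm))

lemma exists_iso_of_distinguished_mk {X Y Z Z' : C} {f : X ⟶ Y} {g : Y ⟶ Z}
    {h : Z ⟶ X⟦(1 : ℤ)⟧} {g' : Y ⟶ Z'} {h' : Z' ⟶ X⟦(1 : ℤ)⟧}
    (hT : Triangle.mk f g h ∈ distTriang C) (hT' : Triangle.mk f g' h' ∈ distTriang C) :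
    ∃ e : Z ≅ Z', g ≫ e.hom = g' ∧ e.hom ≫ h' = h := by
  obtain ⟨e, he₁, he₂⟩ := exists_iso_of_arrow_iso _ _ hT hT'
    (Arrow.isoMk (Iso.refl X) (Iso.refl Y) ((Category.id_comp f).trans (Category.comp_id f).symm))
  have hom₁_eq : e.hom.hom₁ = 𝟙 X := he₁
  have hom₂_eq : e.hom.hom₂ = 𝟙 Y := he₂
  have comm₂ : g ≫ e.hom.hom₃ = 𝟙 Y ≫ g' := by rw [← hom₂_eq]; exact e.hom.comm₂
  have comm₃ : h ≫ (𝟙 X)⟦(1 : ℤ)⟧' = e.hom.hom₃ ≫ h' := by rw [← hom₁_eq]; exact e.hom.comm₃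
  exact ⟨Triangle.π₃.mapIso e, comm₂.trans (Category.id_comp g'), comm₃.symm.trans (by simp)⟩

noncomputable def shiftIsoOfDistinguished {J : Type*} [Category J] {F G H K : J ⥤ C}
    (γ : H ⟶ F) (φ : F ⟶ G) (α : G ⟶ K) (u : ∀ j, G.obj j ⟶ (H.obj j)⟦(1 : ℤ)⟧)
    (v : ∀ j, K.obj j ⟶ (F.obj j)⟦(1 : ℤ)⟧)
    (hu : ∀ j, Triangle.mk (γ.app j) (φ.app j) (u j) ∈ distTriang C)
    (hv : ∀ j, Triangle.mk (φ.app j) (α.app j) (v j) ∈ distTriang C)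
    (h₁ : ∀ j j' (g : (F.obj j)⟦(1 : ℤ)⟧ ⟶ K.obj j'), g = 0)
    (h₂ : ∀ j j' (g : (H.obj j)⟦(1 : ℤ)⟧ ⟶ G.obj j'), g = 0) :
    H ⋙ shiftFunctor C (1 : ℤ) ≅ K :=
  have hu' j : Triangle.mk (φ.app j) (u j) (-(γ.app j)⟦(1 : ℤ)⟧') ∈ distTriang C :=
    rot_of_distTriang _ (hu j)
  have he j := exists_iso_of_distinguished_mk (hu' j) (hv j)
  NatIso.ofComponents (fun j => (he j).choose) fun {j j'} f => by
    obtain ⟨hu₂, -⟩ := (he j).choose_spec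
    obtain ⟨-, hv₃⟩ := (he j').choose_spec
    refine (hom₃_eq_of_comm₂_of_comm₃ (hu' j) (hv j') (F.map f) (G.map f)
      (φ.naturality f).symm (h₁ j j') (h₂ j j') ?_ ?_).symm
    · change u j ≫ _ ≫ K.map f = G.map f ≫ α.app j'
      rw [reassoc_of% hu₂, α.naturality]
    · change ((H.map f)⟦(1 : ℤ)⟧' ≫ _) ≫ v j' = (-(γ.app j)⟦(1 : ℤ)⟧') ≫ (F.map f)⟦(1 : ℤ)⟧'
      rw [Category.assoc, hv₃, Preadditive.comp_neg, Preadditive.neg_comp, ← Functor.map_comp,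
        ← Functor.map_comp, γ.naturality]

end Pretriangulated

end

end CategoryTheory

/-- **The identity `i^! ∘ j_! ≅ i^* ∘ j_* [-1]` used in Remark 0Ca.** In a gluing
situation, the functors `i^! ∘ j_!` and `(i^* ∘ j_*)[-1]` from `C(U)` to `C(Z)` are
isomorphic; in particular `i^!(j_! M_U) ≅ (i^* j_* M_U)[-1]`, naturally in `M_U`. -/
theorem ir_jl_iso_il_jr_shift
    (hglue : IsGluing jl js jr il im ir adj₁ adj₂ adj₃ adj₄) :
    Nonempty (jl ⋙ ir ≅ (jr ⋙ il) ⋙ shiftFunctor CZ (-1 : ℤ)) := by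
  obtain ⟨hz, hunit, hcounit, htri₁, htri₂⟩ := hglue
  have hjl : jl.FullyFaithful := adj₁.fullyFaithfulLOfIsIsoUnit
  have := hjl.full
  have := hjl.faithful
  let t := Adjunction.Triple.mk adj₁ adj₂
  have triangle_jl (M : CU) : ∃ δ, Triangle.mk (adj₄.counit.app (jl.obj M))
      (t.leftToRight.app M) δ ∈ distTriang CX := by
    obtain ⟨δ, hδ⟩ := htri₂ (jl.obj M)
    exact ⟨_, mk_distinguished_of_iso₃ hδ (jr.mapIso (asIso (adj₁.unit.app M)))
      (t.leftToRight_app_map_adj₁_unit_app M)⟩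
  have triangle_jr (M : CU) : ∃ δ, Triangle.mk (t.leftToRight.app M)
      (adj₃.unit.app (jr.obj M)) δ ∈ distTriang CX := by
    obtain ⟨δ, hδ⟩ := htri₁ (jr.obj M)
    exact ⟨_, mk_distinguished_of_iso₁ hδ (jl.mapIso (asIso (adj₂.counit.app M)))
      (t.map_adj₂_counit_app_leftToRight_app M)⟩
  choose u hu using triangle_jl
  choose v hv using triangle_jr
  have jl_to_im (M N : CU) (g : (jl.obj M)⟦(1 : ℤ)⟧ ⟶ im.obj (il.obj (jr.obj N))) : g = 0 :=
    jl.eq_zero_of_forall_obj_shift_eq_zero 1 (adj₁.eq_zero_of_isZero_right_obj (hz _)) g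
  have im_to_jr (M N : CU) (g : (im.obj (ir.obj (jl.obj M)))⟦(1 : ℤ)⟧ ⟶ jr.obj N) : g = 0 :=
    im.eq_zero_of_forall_obj_shift_eq_zero 1 (adj₂.eq_zero_of_isZero_left_obj (hz _)) g
  exact ⟨(FullyFaithful.ofFullyFaithful im).isoCompShiftOfIso (by norm_num : (1 : ℤ) + -1 = 0)
    (shiftIsoOfDistinguished (whiskerLeft jl adj₄.counit) t.leftToRight
      (whiskerLeft jr adj₃.unit) u v hu hv jl_to_im im_to_jr)⟩
end
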